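/- arXiv:1701.00141 — 4 statements merged into one kernel-verified Lean document; each statement's English description precedes it below -/
import Mathlib

section
/- Let Γ be a nontrivial finite group acting faithfully on a finite set X, let U be a set of representatives of the orbits of Γ on X, and let L = {σ ∈ Γ : σ·u = u for all u ∈ U} be the pointwise stabilizer of U. Then D_Γ(X) ≤ D_L(X) + 1, where L acts on X by restriction of the action of Γ. -/
/-- The distinguishing number of the action of `Γ` on `X` relative to a subgroup `H`:
the smallest number `d` of labels admitting a labeling `φ : X → Fin d` such that
every element of `Γ` preserving the labeling lies in `H`. -/
noncomputable def DRel (Γ : Type*) [Group Γ] (X : Type*) [MulAction Γ X] (H : Subgroup Γ) : ℕ :=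
  sInf {d : ℕ | ∃ φ : X → Fin d, ∀ g : Γ, (∀ x : X, φ (g • x) = φ x) → g ∈ H}

/-- The ordinary distinguishing number `D_Γ(X)`. -/
noncomputable def D (Γ : Type*) [Group Γ] (X : Type*) [MulAction Γ X] : ℕ :=
  DRel Γ X ⊥

/-!
Take a distinguishing labeling of `X` for `L` and give the points of `U` one extra, new label.
An element of `Γ` preserving the new labeling maps `U` into `U`; as `U` meets every orbit exactly
once it then fixes `U` pointwise, so it lies in `L`, and it preserves the old labeling, so it is
trivial.
-/

open MulAction

section Distinguishing

variable {Γ X : Type*} [Group Γ] [MulAction Γ X]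

theorem D_le_of_distinguishing {d : ℕ} (φ : X → Fin d)
    (hφ : ∀ g : Γ, (∀ x, φ (g • x) = φ x) → g = 1) : D Γ X ≤ d :=
  Nat.sInf_le ⟨φ, fun g hg => Subgroup.mem_bot.2 (hφ g hg)⟩

theorem exists_distinguishing_fin_D [Finite X] [FaithfulSMul Γ X] :
    ∃ φ : X → Fin (D Γ X), ∀ g : Γ, (∀ x, φ (g • x) = φ x) → g = 1 := by
  have hne : {d : ℕ | ∃ φ : X → Fin d, ∀ g : Γ,
      (∀ x, φ (g • x) = φ x) → g ∈ (⊥ : Subgroup Γ)}.Nonempty := by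
    let e := Finite.equivFin X
    refine ⟨Nat.card X, e, fun g hg =>
      Subgroup.mem_bot.2 (eq_of_smul_eq_smul (α := X) fun x => ?_)⟩
    rw [one_smul]
    exact e.injective (hg x)
  obtain ⟨φ, hφ⟩ := Nat.sInf_mem hne
  exact ⟨φ, fun g hg => Subgroup.mem_bot.1 (hφ g hg)⟩

theorem smul_eq_self_of_smul_mem_transversal {U : Set X}
    (hU : ∀ x : X, ∃! u : X, u ∈ U ∧ u ∈ orbit Γ x) {g : Γ} {u : X}
    (hu : u ∈ U) (hgu : g • u ∈ U) : g • u = u :=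
  (hU u).unique ⟨hgu, mem_orbit u g⟩ ⟨hu, mem_orbit_self u⟩

end Distinguishing

section MarkLabel

variable {X : Type*} (U : Set X) {d : ℕ} (φ : X → Fin d)

open Classical in
noncomputable def markLabel (x : X) : Fin (d + 1) :=
  if x ∈ U then Fin.last d else (φ x).castSucc

variable {U φ}

theorem markLabel_eq_last_iff {x : X} : markLabel U φ x = Fin.last d ↔ x ∈ U := by
  by_cases hx : x ∈ U <;> simp [markLabel, hx, (Fin.castSucc_lt_last (φ x)).ne]

theorem markLabel_of_notMem {x : X} (hx : x ∉ U) : markLabel U φ x = (φ x).castSucc := by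
  simp [markLabel, hx]

variable {Γ : Type*} [Group Γ] [MulAction Γ X] {g : Γ}

theorem smul_mem_iff_of_preserves_markLabel
    (hg : ∀ x, markLabel U φ (g • x) = markLabel U φ x) (x : X) :
    g • x ∈ U ↔ x ∈ U := by
  rw [← markLabel_eq_last_iff (φ := φ), hg, markLabel_eq_last_iff]

theorem preserves_of_preserves_markLabel
    (hg : ∀ x, markLabel U φ (g • x) = markLabel U φ x) (hfix : ∀ u ∈ U, g • u = u)
    (x : X) : φ (g • x) = φ x := by
  by_cases hx : x ∈ U
  · rw [hfix x hx]
  · have hgx : g • x ∉ U := (smul_mem_iff_of_preserves_markLabel hg x).not.2 hx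
    have := hg x
    rw [markLabel_of_notMem hx, markLabel_of_notMem hgx] at this
    exact Fin.castSucc_injective _ this

end MarkLabel

theorem stmt_1_general (Γ X : Type*) [Group Γ] [MulAction Γ X]
    [FaithfulSMul Γ X] [Finite X]
    (U : Set X) (hU : ∀ x : X, ∃! u : X, u ∈ U ∧ u ∈ MulAction.orbit Γ x)
    (L : Subgroup Γ) (hL : ∀ σ : Γ, σ ∈ L ↔ ∀ u ∈ U, σ • u = u) :
    D Γ X ≤ D ↥L X + 1 := by
  obtain ⟨φ, hφ⟩ := exists_distinguishing_fin_D (Γ := L) (X := X)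
  refine D_le_of_distinguishing (markLabel U φ) fun g hg => ?_
  have hgL : g ∈ L := (hL g).2 fun u hu =>
    smul_eq_self_of_smul_mem_transversal hU hu
      ((smul_mem_iff_of_preserves_markLabel hg u).2 hu)
  have hφg : ∀ x, φ ((⟨g, hgL⟩ : L) • x) = φ x :=
    preserves_of_preserves_markLabel hg ((hL g).1 hgL)
  exact congrArg Subtype.val (hφ _ hφg)

theorem stmt_1 (Γ X : Type*) [Group Γ] [Finite Γ] [Nontrivial Γ] [MulAction Γ X]
    [FaithfulSMul Γ X] [Finite X]
    (U : Set X) (hU : ∀ x : X, ∃! u : X, u ∈ U ∧ u ∈ MulAction.orbit Γ x)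
    (L : Subgroup Γ) (hL : ∀ σ : Γ, σ ∈ L ↔ ∀ u ∈ U, σ • u = u) :
    D Γ X ≤ D ↥L X + 1 :=
  stmt_1_general Γ X U hU L hL
end

section
/- Let Γ be a finite group acting faithfully on a finite set X and let H ≤ Γ act on X by restriction. Suppose φ is a distinguishing labeling of X for the H-action with D_H(X) labels, and let σ₁,...,σ_k be the nonidentity elements of Γ that preserve φ. If the intersection ⋂_{i=1}^k m(σ_i) of their motion sets m(σ_i) = {x ∈ X : σ_i·x ≠ x} is nonempty, then D_Γ(X) ≤ D_H(X) + 1. -/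
/-!
Give a point `x₀` lying in every motion set a fresh label. An element preserving the new
labeling must fix `x₀` and preserve `φ`; every nontrivial element preserving `φ` is some `σᵢ`,
which moves `x₀`, so only the identity survives.
-/

theorem DRel_le_of_forall_mem {Γ X : Type*} [Group Γ] [MulAction Γ X] {H : Subgroup Γ} {d : ℕ}
    (φ : X → Fin d) (hφ : ∀ g : Γ, (∀ x : X, φ (g • x) = φ x) → g ∈ H) :
    DRel Γ X H ≤ d :=
  Nat.sInf_le ⟨φ, hφ⟩

def markPoint {X : Type*} [DecidableEq X] {d : ℕ} (φ : X → Fin d) (x₀ : X) (x : X) :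
    Fin (d + 1) :=
  if x = x₀ then Fin.last d else (φ x).castSucc

section markPoint

variable {Γ X : Type*} [Group Γ] [MulAction Γ X] [DecidableEq X] {d : ℕ} {φ : X → Fin d}
  {x₀ : X}

theorem markPoint_eq_last_iff {x : X} : markPoint φ x₀ x = Fin.last d ↔ x = x₀ := by
  unfold markPoint
  split_ifs with hx
  · simp [hx]
  · simp [hx, (Fin.castSucc_lt_last (φ x)).ne]

theorem markPoint_of_ne {x : X} (hx : x ≠ x₀) : markPoint φ x₀ x = (φ x).castSucc :=
  if_neg hx

theorem smul_eq_self_of_preserves_markPoint {g : Γ}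
    (hg : ∀ x : X, markPoint φ x₀ (g • x) = markPoint φ x₀ x) : g • x₀ = x₀ :=
  markPoint_eq_last_iff.mp ((hg x₀).trans (markPoint_eq_last_iff.mpr rfl))

theorem preserves_of_preserves_markPoint {g : Γ}
    (hg : ∀ x : X, markPoint φ x₀ (g • x) = markPoint φ x₀ x) (x : X) : φ (g • x) = φ x := by
  have hfix := smul_eq_self_of_preserves_markPoint hg
  by_cases hx : x = x₀
  · rw [hx, hfix]
  · have hgx : g • x ≠ x₀ := fun h => hx (smul_left_cancel g (h.trans hfix.symm))
    have := hg x
    rw [markPoint_of_ne hgx, markPoint_of_ne hx] at this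
    exact Fin.castSucc_injective _ this

end markPoint

theorem stmt_3_general (Γ X : Type*) [Group Γ] [MulAction Γ X] (d k : ℕ)
    (φ : X → Fin d) (σ : Fin k → Γ)
    (hσ3 : ∀ g : Γ, g ≠ 1 → (∀ x : X, φ (g • x) = φ x) → ∃ i, g = σ i)
    (hmot : ∃ x : X, ∀ i, σ i • x ≠ x) :
    D Γ X ≤ d + 1 := by
  classical
  obtain ⟨x₀, hx₀⟩ := hmot
  refine DRel_le_of_forall_mem (markPoint φ x₀) fun g hg => ?_
  rw [Subgroup.mem_bot]
  by_contra hne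
  obtain ⟨i, rfl⟩ := hσ3 g hne (preserves_of_preserves_markPoint hg)
  exact hx₀ i (smul_eq_self_of_preserves_markPoint hg)

theorem stmt_3 (Γ X : Type*) [Group Γ] [Finite Γ] [MulAction Γ X] [FaithfulSMul Γ X]
    [Finite X] (H : Subgroup Γ) (d k : ℕ) (hd : d = D ↥H X)
    (φ : X → Fin d) (hφ : ∀ h : H, (∀ x : X, φ (h • x) = φ x) → h = 1)
    (σ : Fin k → Γ) (hσ1 : ∀ i, σ i ≠ 1) (hσ2 : ∀ i, ∀ x : X, φ (σ i • x) = φ x)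
    (hσ3 : ∀ g : Γ, g ≠ 1 → (∀ x : X, φ (g • x) = φ x) → ∃ i, g = σ i)
    (hmot : ∃ x : X, ∀ i, σ i • x ≠ x) :
    D Γ X ≤ d + 1 :=
  stmt_3_general Γ X d k φ σ hσ3 hmot
end

section
/- Let Γ be a finite group acting faithfully on a finite set X and let H ≤ Γ act on X by restriction. Suppose φ is a distinguishing labeling of X for the H-action with D_H(X) labels, and let σ₁,...,σ_k be the nonidentity elements of Γ preserving φ. If T = {I₁,...,I_t} is a partition of {1,...,k} such that ⋂_{i∈I_j} m(σ_i) ≠ ∅ for every j, then D_Γ(X) ≤ D_H(X) + t. -/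
section Distinguishing

variable {Γ X : Type*} [Group Γ] [MulAction Γ X]

theorem D_le_natCard_of_labeling {α : Type*} [Finite α] (ψ : X → α)
    (hψ : ∀ g : Γ, (∀ x, ψ (g • x) = ψ x) → g = 1) : D Γ X ≤ Nat.card α := by
  let e := Finite.equivFin α
  refine Nat.sInf_le ⟨e ∘ ψ, fun g hg => Subgroup.mem_bot.2 (hψ g fun x => ?_)⟩
  exact e.injective (hg x)

open Classical in
noncomputable def individualize {α : Type*} (φ : X → α) (S : Set X) (x : X) : α ⊕ S :=
  if h : x ∈ S then .inr ⟨x, h⟩ else .inl (φ x)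

variable {α : Type*} {φ : X → α} {S : Set X} {g : Γ}

theorem smul_eq_of_preserves_individualize
    (hg : ∀ x, individualize φ S (g • x) = individualize φ S x) {x : X} (hx : x ∈ S) :
    g • x = x := by
  have hgx := hg x
  unfold individualize at hgx
  split_ifs at hgx
  exact congrArg Subtype.val (Sum.inr_injective hgx)

theorem preserves_of_preserves_individualize
    (hg : ∀ x, individualize φ S (g • x) = individualize φ S x) (x : X) :
    φ (g • x) = φ x := by
  by_cases hx : x ∈ S
  · rw [smul_eq_of_preserves_individualize hg hx]
  · have hgx := hg x
    unfold individualize at hgx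
    split_ifs at hgx
    exact Sum.inl_injective hgx

theorem individualize_eq_one
    (hS : ∀ g : Γ, g ≠ 1 → (∀ x, φ (g • x) = φ x) → ∃ x ∈ S, g • x ≠ x)
    (hg : ∀ x, individualize φ S (g • x) = individualize φ S x) : g = 1 := by
  by_contra hg1
  obtain ⟨x, hxS, hgx⟩ := hS g hg1 (preserves_of_preserves_individualize hg)
  exact hgx (smul_eq_of_preserves_individualize hg hxS)

theorem D_le_add_of_moves_range {d t : ℕ} (φ : X → Fin d) (w : Fin t → X)
    (hw : ∀ g : Γ, g ≠ 1 → (∀ x, φ (g • x) = φ x) → ∃ j, g • w j ≠ w j) :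
    D Γ X ≤ d + t := calc
  D Γ X ≤ Nat.card (Fin d ⊕ Set.range w) :=
    D_le_natCard_of_labeling (individualize φ (Set.range w)) fun g =>
      individualize_eq_one fun g hg1 hgφ => by
        obtain ⟨j, hj⟩ := hw g hg1 hgφ
        exact ⟨w j, Set.mem_range_self j, hj⟩
  _ = d + Nat.card (Set.range w) := by rw [Nat.card_sum, Nat.card_fin]
  _ ≤ d + t := by grw [Finite.card_range_le, Nat.card_fin]

end Distinguishing

theorem stmt_4_general (Γ X : Type*) [Group Γ] [MulAction Γ X] (d k : ℕ)
    (φ : X → Fin d)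
    (σ : Fin k → Γ)
    (hσ3 : ∀ g : Γ, g ≠ 1 → (∀ x : X, φ (g • x) = φ x) → ∃ i, g = σ i)
    (t : ℕ) (p : Fin k → Fin t)
    (hblk : ∀ j : Fin t, ∃ x : X, ∀ i, p i = j → σ i • x ≠ x) :
    D Γ X ≤ d + t := by
  choose w hw using hblk
  refine D_le_add_of_moves_range φ w fun g hg1 hgφ => ?_
  obtain ⟨i, rfl⟩ := hσ3 g hg1 hgφ
  exact ⟨p i, hw (p i) i rfl⟩

theorem stmt_4 (Γ X : Type*) [Group Γ] [Finite Γ] [MulAction Γ X] [FaithfulSMul Γ X]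
    [Finite X] (H : Subgroup Γ) (d k : ℕ) (hd : d = D ↥H X)
    (φ : X → Fin d) (hφ : ∀ h : H, (∀ x : X, φ (h • x) = φ x) → h = 1)
    (σ : Fin k → Γ) (hσ1 : ∀ i, σ i ≠ 1) (hσ2 : ∀ i, ∀ x : X, φ (σ i • x) = φ x)
    (hσ3 : ∀ g : Γ, g ≠ 1 → (∀ x : X, φ (g • x) = φ x) → ∃ i, g = σ i)
    (t : ℕ) (p : Fin k → Fin t) (hsurj : Function.Surjective p)
    (hblk : ∀ j : Fin t, ∃ x : X, ∀ i, p i = j → σ i • x ≠ x) :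
    D Γ X ≤ d + t :=
  stmt_4_general Γ X d k φ σ hσ3 t p hblk
end

section
/- Let Γ be a group of order k+1 acting faithfully on a finite set X, with nonidentity elements σ₁,...,σ_k. If t is the minimum size of a partition T = {I₁,...,I_t} of {1,...,k} such that ⋂_{i∈I_j} m(σ_i) ≠ ∅ for all j, then D_Γ(X) ≤ 1 + t. -/
open Finset

section Labeling

variable {Γ X : Type*} [Group Γ] [MulAction Γ X]

noncomputable def Finset.markLabeling (s : Finset X) (x : X) : Fin (s.card + 1) :=
  open Classical in
  if h : x ∈ s then (s.equivFin ⟨x, h⟩).succ else 0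

theorem Finset.smul_eq_of_markLabeling_smul_eq {s : Finset X} {g : Γ}
    (hg : ∀ y, s.markLabeling (g • y) = s.markLabeling y) {x : X} (hx : x ∈ s) :
    g • x = x := by
  classical
  have hlabel := hg x
  simp only [Finset.markLabeling, dif_pos hx] at hlabel
  split_ifs at hlabel with hgx
  · simpa using s.equivFin.injective (Fin.succ_injective _ hlabel)
  · exact absurd hlabel.symm (Fin.succ_ne_zero _)

theorem DRel_le_card_add_one (H : Subgroup Γ) (s : Finset X)
    (hs : ∀ g : Γ, (∀ x ∈ s, g • x = x) → g ∈ H) : DRel Γ X H ≤ s.card + 1 :=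
  Nat.sInf_le ⟨s.markLabeling, fun _ hg ↦ hs _ fun _ ↦ s.smul_eq_of_markLabeling_smul_eq hg⟩

end Labeling

theorem stmt_5_general (Γ X : Type*) [Group Γ] [MulAction Γ X] (k : ℕ)
    (σ : Fin k → Γ)
    (hσ2 : ∀ g : Γ, g ≠ 1 → ∃ i, g = σ i)
    (t : ℕ)
    (ht : IsLeast {t' : ℕ | ∃ p : Fin k → Fin t', Function.Surjective p ∧
      ∀ j : Fin t', ∃ x : X, ∀ i, p i = j → σ i • x ≠ x} t) :
    D Γ X ≤ 1 + t := by
  classical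
  obtain ⟨p, -, hmoved⟩ := ht.1
  choose x hx using hmoved
  have hfix : ∀ g : Γ, (∀ y ∈ univ.image x, g • y = y) → g ∈ (⊥ : Subgroup Γ) := by
    intro g hg
    by_contra hg1
    obtain ⟨i, rfl⟩ := hσ2 g hg1
    exact hx (p i) i rfl (hg _ (mem_image_of_mem x (mem_univ _)))
  calc D Γ X ≤ (univ.image x).card + 1 := DRel_le_card_add_one ⊥ _ hfix
    _ ≤ t + 1 := by simpa using card_image_le (s := univ) (f := x)
    _ = 1 + t := add_comm _ _

theorem stmt_5 (Γ X : Type*) [Group Γ] [Finite Γ] [MulAction Γ X] [FaithfulSMul Γ X]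
    [Finite X] (k : ℕ) (hcard : Nat.card Γ = k + 1)
    (σ : Fin k → Γ) (hinj : Function.Injective σ) (hσ1 : ∀ i, σ i ≠ 1)
    (hσ2 : ∀ g : Γ, g ≠ 1 → ∃ i, g = σ i)
    (t : ℕ)
    (ht : IsLeast {t' : ℕ | ∃ p : Fin k → Fin t', Function.Surjective p ∧
      ∀ j : Fin t', ∃ x : X, ∀ i, p i = j → σ i • x ≠ x} t) :
    D Γ X ≤ 1 + t :=
  stmt_5_general Γ X k σ hσ2 t ht
end
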